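/- For every positive integer k and every complex number q with |q| < 1 (with the relevant denominators nonzero), the rational function Tbar_k defined by Tbar_1(q) = −q(1+q)/(1+q^2) and Tbar_k(q) = ((q − q^{2k-1}) Tbar_{k-1}(q) − q^{2k-1}(1+q)) / (1+q^{2k}) for k > 1 admits the closed form: Tbar_k(q) = −q^{2k-1}(1+q)/(1+q^{2k}) − (1+q) ((q^2;q^2)_{k-1} / (-q^2;q^2)_k) · sum over j from 0 to k−2 of q^{2k-j-2} (-q^2;q^2)_{k-j-2} / (q^2;q^2)_{k-j-2}. -/

import Mathlib

open scoped BigOperators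

/-- The finite q-Pochhammer symbol `(a; q)_N = ∏_{j=0}^{N-1} (1 - a q^j)`. -/
noncomputable def qPoch (a q : ℂ) (N : ℕ) : ℂ := ∏ j ∈ Finset.range N, (1 - a * q ^ j)

/-- The infinite q-Pochhammer symbol `(a; q)_∞ = ∏_{j=0}^{∞} (1 - a q^j)`. -/
noncomputable def qPochInf (a q : ℂ) : ℂ := ∏' j : ℕ, (1 - a * q ^ j)

/-- An overpartition of `n`: a multiset of positive non-overlined parts together with a
finset of positive overlined parts (the overlined parts are distinct), with total sum `n`. -/
structure Overpartition (n : ℕ) where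
  parts : Multiset ℕ
  overlined : Finset ℕ
  parts_pos : ∀ x ∈ parts, 0 < x
  overlined_pos : ∀ x ∈ overlined, 0 < x
  sum_eq : parts.sum + ∑ x ∈ overlined, x = n

/-- `s` is the smallest non-overlined part of `π`, it appears exactly `k` times among the
non-overlined parts, and every overlined part is greater than `s`. -/
def SptbarCond (k : ℕ) {n : ℕ} (π : Overpartition n) (s : ℕ) : Prop :=
  s ∈ π.parts ∧ (∀ x ∈ π.parts, s ≤ x) ∧ π.parts.count s = k ∧ ∀ x ∈ π.overlined, s < x

/-- `SptbarCond` together with: every part other than `s` is incongruent to `s` modulo 2. -/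
def SptbarOCond (k : ℕ) {n : ℕ} (π : Overpartition n) (s : ℕ) : Prop :=
  SptbarCond k π s ∧ (∀ x ∈ π.parts, x ≠ s → x % 2 ≠ s % 2) ∧
    ∀ x ∈ π.overlined, x % 2 ≠ s % 2

/-- The number of parts of `π` that are greater than `s`. -/
def numGreater {n : ℕ} (π : Overpartition n) (s : ℕ) : ℕ :=
  (π.parts.filter (fun x => s < x)).card + π.overlined.card

/-- The total number of parts of the overpartition `π`. -/
def numParts {n : ℕ} (π : Overpartition n) : ℕ :=
  π.parts.card + π.overlined.card

/-- `sptbar k n`: the number of overpartitions of `n` whose smallest non-overlined part `s`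
appears exactly `k` times and all of whose overlined parts are greater than `s`. -/
noncomputable def sptbar (k n : ℕ) : ℕ :=
  Nat.card {π : Overpartition n // ∃ s, SptbarCond k π s}

/-- `sptbar' k n = a_e(k,n) - a_o(k,n)`. -/
noncomputable def sptbar' (k n : ℕ) : ℤ :=
  (Nat.card {π : Overpartition n // ∃ s, SptbarCond k π s ∧ Even (numGreater π s)} : ℤ) -
    (Nat.card {π : Overpartition n // ∃ s, SptbarCond k π s ∧ Odd (numGreater π s)} : ℤ)

/-- `sptbarO k n`: as `sptbar k n`, with all parts other than the smallest non-overlined part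
incongruent to it modulo 2. -/
noncomputable def sptbarO (k n : ℕ) : ℕ :=
  Nat.card {π : Overpartition n // ∃ s, SptbarOCond k π s}

/-- `sptbarO' k n = b_e(k,n) - b_o(k,n)`. -/
noncomputable def sptbarO' (k n : ℕ) : ℤ :=
  (Nat.card {π : Overpartition n // ∃ s, SptbarOCond k π s ∧ Even (numGreater π s)} : ℤ) -
    (Nat.card {π : Overpartition n // ∃ s, SptbarOCond k π s ∧ Odd (numGreater π s)} : ℤ)

/-- The number of overpartitions of `n` into even parts. -/
noncomputable def pbarE (n : ℕ) : ℕ :=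
  Nat.card {π : Overpartition n // (∀ x ∈ π.parts, Even x) ∧ ∀ x ∈ π.overlined, Even x}

/-- The number of overpartitions of `n` into odd parts with no non-overlined part equal to 1. -/
noncomputable def pbarOex (n : ℕ) : ℕ :=
  Nat.card {π : Overpartition n //
    (∀ x ∈ π.parts, Odd x) ∧ (∀ x ∈ π.overlined, Odd x) ∧ (1 : ℕ) ∉ π.parts}

/-- Among overpartitions of `n` into odd parts with no non-overlined 1's: the number of those
with an even number of parts minus the number of those with an odd number of parts. -/
noncomputable def pbarOex' (n : ℕ) : ℤ :=
  (Nat.card {π : Overpartition n // ((∀ x ∈ π.parts, Odd x) ∧ (∀ x ∈ π.overlined, Odd x) ∧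
      (1 : ℕ) ∉ π.parts) ∧ Even (numParts π)} : ℤ) -
    (Nat.card {π : Overpartition n // ((∀ x ∈ π.parts, Odd x) ∧ (∀ x ∈ π.overlined, Odd x) ∧
      (1 : ℕ) ∉ π.parts) ∧ Odd (numParts π)} : ℤ)

/-- `sptkd k n`: the number of partitions of `n` whose smallest part appears exactly `k`
times and all of whose remaining parts are distinct. -/
noncomputable def sptkd (k n : ℕ) : ℕ :=
  Nat.card {m : Multiset ℕ // (∀ x ∈ m, 0 < x) ∧ m.sum = n ∧
    ∃ s, s ∈ m ∧ (∀ x ∈ m, s ≤ x) ∧ m.count s = k ∧ ∀ x ∈ m, x ≠ s → m.count x = 1}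

/-- `Tbar q 1 = -q(1+q)/(1+q^2)` and
`Tbar q k = ((q - q^(2k-1)) * Tbar q (k-1) - q^(2k-1)(1+q)) / (1 + q^(2k))` for `k > 1`. -/
noncomputable def Tbar (q : ℂ) : ℕ → ℂ
  | 0 => 0
  | 1 => -(q * (1 + q)) / (1 + q ^ 2)
  | (k + 2) => ((q - q ^ (2 * (k + 2) - 1)) * Tbar q (k + 1) - q ^ (2 * (k + 2) - 1) * (1 + q)) /
      (1 + q ^ (2 * (k + 2)))


/-! Writing `P n = (q²;q²)_n` and `N n = (-q²;q²)_n`, the rescaled quantity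
`V n = Tbar q (n+1) · N (n+1) / P n` satisfies the first-order recurrence
`V (n+1) = q · V n - (1+q) q^(2n+3) N (n+1) / P (n+1)` with `V 0 = -q(1+q)`, which unrolls to
`V n = -(1+q) ∑_{i ≤ n} q^(n+1+i) N i / P i`. Dividing back and splitting off the term `i = n`
gives the closed form, after reversing the order of summation. -/

section

variable {q : ℂ}

lemma qPoch_succ (a b : ℂ) (n : ℕ) : qPoch a b (n + 1) = qPoch a b n * (1 - a * b ^ n) :=
  Finset.prod_range_succ _ _

lemma qPoch_ne_zero {a : ℂ} (ha : ‖a‖ < 1) (hq : ‖q‖ ≤ 1) (n : ℕ) : qPoch a q n ≠ 0 := by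
  refine Finset.prod_ne_zero_iff.mpr fun j _ => sub_ne_zero.mpr fun h => ?_
  have : ‖a * q ^ j‖ < 1 := by
    rw [norm_mul, norm_pow]
    exact mul_lt_one_of_nonneg_of_lt_one_left (norm_nonneg a) ha (pow_le_one₀ (norm_nonneg q) hq)
  simp [← h] at this

lemma qPoch_sq_succ (n : ℕ) :
    qPoch (q ^ 2) (q ^ 2) (n + 1) = qPoch (q ^ 2) (q ^ 2) n * (1 - q ^ (2 * n + 2)) := by
  rw [qPoch_succ]; ring

lemma qPoch_neg_sq_succ (n : ℕ) :
    qPoch (-q ^ 2) (q ^ 2) (n + 1) = qPoch (-q ^ 2) (q ^ 2) n * (1 + q ^ (2 * n + 2)) := by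
  rw [qPoch_succ]; ring

lemma qPoch_sq_ne_zero (hq : ‖q‖ < 1) (n : ℕ) : qPoch (q ^ 2) (q ^ 2) n ≠ 0 :=
  have hq2 : ‖q ^ 2‖ < 1 := by rw [norm_pow]; exact pow_lt_one₀ (norm_nonneg q) hq two_ne_zero
  qPoch_ne_zero hq2 hq2.le n

lemma qPoch_neg_sq_ne_zero (hq : ‖q‖ < 1) (n : ℕ) : qPoch (-q ^ 2) (q ^ 2) n ≠ 0 :=
  have hq2 : ‖q ^ 2‖ < 1 := by rw [norm_pow]; exact pow_lt_one₀ (norm_nonneg q) hq two_ne_zero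
  qPoch_ne_zero (by rwa [norm_neg]) hq2.le n

lemma one_add_pow_two_mul_add_two_ne_zero (hq : ‖q‖ < 1) (n : ℕ) : 1 + q ^ (2 * n + 2) ≠ 0 := by
  have h := qPoch_neg_sq_ne_zero hq (n + 1)
  rw [qPoch_neg_sq_succ] at h
  exact right_ne_zero_of_mul h

lemma one_add_mul_Tbar_succ_succ (hq : ‖q‖ < 1) (n : ℕ) :
    (1 + q ^ (2 * n + 4)) * Tbar q (n + 2) =
      (q - q ^ (2 * n + 3)) * Tbar q (n + 1) - q ^ (2 * n + 3) * (1 + q) := by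
  have hden := one_add_pow_two_mul_add_two_ne_zero hq (n + 1)
  rw [show 2 * (n + 1) + 2 = 2 * n + 4 by ring] at hden
  rw [Tbar, show 2 * (n + 2) - 1 = 2 * n + 3 by omega, show 2 * (n + 2) = 2 * n + 4 by ring]
  field_simp

lemma Tbar_succ_mul_qPoch_div (hq : ‖q‖ < 1) (n : ℕ) :
    Tbar q (n + 1) * (qPoch (-q ^ 2) (q ^ 2) (n + 1) / qPoch (q ^ 2) (q ^ 2) n) =
      -(1 + q) * ∑ i ∈ Finset.range (n + 1),
        q ^ (n + 1 + i) * (qPoch (-q ^ 2) (q ^ 2) i / qPoch (q ^ 2) (q ^ 2) i) := by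
  induction n with
  | zero =>
    have h := one_add_pow_two_mul_add_two_ne_zero hq 0
    simp only [zero_add, Finset.sum_range_one, Tbar, qPoch, Finset.prod_range_one,
      Finset.prod_range_zero]
    field_simp
    ring
  | succ n ih =>
    have hfactor : 1 - q ^ (2 * n + 2) ≠ 0 := by
      have h := qPoch_sq_ne_zero hq (n + 1)
      rw [qPoch_sq_succ] at h
      exact right_ne_zero_of_mul h
    have hshift : ∑ i ∈ Finset.range (n + 1),
        q ^ (n + 2 + i) * (qPoch (-q ^ 2) (q ^ 2) i / qPoch (q ^ 2) (q ^ 2) i) =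
          q * ∑ i ∈ Finset.range (n + 1),
            q ^ (n + 1 + i) * (qPoch (-q ^ 2) (q ^ 2) i / qPoch (q ^ 2) (q ^ 2) i) := by
      rw [Finset.mul_sum]
      exact Finset.sum_congr rfl fun i _ => by ring
    calc Tbar q (n + 2) * (qPoch (-q ^ 2) (q ^ 2) (n + 2) / qPoch (q ^ 2) (q ^ 2) (n + 1))
        = (1 + q ^ (2 * n + 4)) * Tbar q (n + 2) * qPoch (-q ^ 2) (q ^ 2) (n + 1) /
            (qPoch (q ^ 2) (q ^ 2) n * (1 - q ^ (2 * n + 2))) := by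
          rw [qPoch_neg_sq_succ (n + 1), qPoch_sq_succ]; ring
      _ = q * (Tbar q (n + 1) * (qPoch (-q ^ 2) (q ^ 2) (n + 1) / qPoch (q ^ 2) (q ^ 2) n)) -
            (1 + q) * (q ^ (2 * n + 3) *
              (qPoch (-q ^ 2) (q ^ 2) (n + 1) / qPoch (q ^ 2) (q ^ 2) (n + 1))) := by
          rw [one_add_mul_Tbar_succ_succ hq, qPoch_sq_succ]
          field_simp
          ring
      _ = _ := by
          rw [ih, Finset.sum_range_succ _ (n + 1), hshift]
          ring

lemma sum_range_pow_mul_reflect (f : ℕ → ℂ) (n : ℕ) :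
    ∑ j ∈ Finset.range n, q ^ (2 * (n + 1) - j - 2) * f (n + 1 - j - 2) =
      ∑ i ∈ Finset.range n, q ^ (n + 1 + i) * f i := by
  rw [← Finset.sum_range_reflect (fun i => q ^ (n + 1 + i) * f i)]
  refine Finset.sum_congr rfl fun j hj => ?_
  have hj : j < n := Finset.mem_range.mp hj
  rw [show n + 1 + (n - 1 - j) = 2 * (n + 1) - j - 2 by omega,
    show n - 1 - j = n + 1 - j - 2 by omega]

end

/-- Theorem 2.7: closed form for `Tbar q k`. -/
theorem Tbar_closed_form (k : ℕ) (hk : 1 ≤ k) (q : ℂ) (hq : ‖q‖ < 1) :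
    Tbar q k = -(q ^ (2 * k - 1) * (1 + q)) / (1 + q ^ (2 * k)) -
      (1 + q) * (qPoch (q ^ 2) (q ^ 2) (k - 1) / qPoch (-q ^ 2) (q ^ 2) k) *
        ∑ j ∈ Finset.range (k - 1), q ^ (2 * k - j - 2) *
          (qPoch (-q ^ 2) (q ^ 2) (k - j - 2) / qPoch (q ^ 2) (q ^ 2) (k - j - 2)) := by
  obtain ⟨n, rfl⟩ : ∃ n, k = n + 1 := ⟨k - 1, by omega⟩
  have hP := qPoch_sq_ne_zero hq n
  have hN := qPoch_neg_sq_ne_zero hq n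
  have hden := one_add_pow_two_mul_add_two_ne_zero hq n
  have hratio := div_ne_zero (qPoch_neg_sq_ne_zero hq (n + 1)) hP
  rw [Nat.add_sub_cancel,
    sum_range_pow_mul_reflect fun i => qPoch (-q ^ 2) (q ^ 2) i / qPoch (q ^ 2) (q ^ 2) i,
    show 2 * (n + 1) - 1 = 2 * n + 1 by omega, show 2 * (n + 1) = 2 * n + 2 by ring,
    eq_div_of_mul_eq hratio (Tbar_succ_mul_qPoch_div hq n), Finset.sum_range_succ,
    qPoch_neg_sq_succ]
  field_simp
  ring
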